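/- arXiv:2408.13829 — 4 statements merged into one kernel-verified Lean document; each statement's English description precedes it below -/
import Mathlib

section
/- Let n ≥ 1 and let f₁, f₂ : ℂⁿ → ℝ be the quadratic functions fᵢ(t) = Re(tᴴ Aᵢ t) + 2·Re(bᵢᴴ t) + cᵢ, where A₁, A₂ are n×n complex Hermitian matrices, b₁, b₂ ∈ ℂⁿ, and c₁, c₂ ∈ ℝ. Assume there exists t₀ ∈ ℂⁿ with f₁(t₀) < 0 (strict feasibility). Then the implication (for all t, f₁(t) ≤ 0 implies f₂(t) ≤ 0) holds if and only if there exists a real κ ≥ 0 such that the (n+1)×(n+1) Hermitian block matrix κ·[[A₁, b₁],[b₁ᴴ, c₁]] − [[A₂, b₂],[b₂ᴴ, c₂]] is positive semidefinite. -/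
open Matrix
open scoped ComplexOrder

/-- The (n+1)×(n+1) Hermitian block matrix [[A, b],[bᴴ, c]]. -/
noncomputable def blockQuad {n : ℕ} (A : Matrix (Fin n) (Fin n) ℂ) (b : Fin n → ℂ) (c : ℝ) :
    Matrix (Fin n ⊕ Unit) (Fin n ⊕ Unit) ℂ :=
  Matrix.fromBlocks A (Matrix.of fun i (_ : Unit) => b i)
    (Matrix.of fun (_ : Unit) j => star (b j)) (Matrix.of fun _ _ => (c : ℂ))

section Aux
variable {m : Type*} [Fintype m]

noncomputable def qf (M : Matrix m m ℂ) (x : m → ℂ) : ℝ := (star x ⬝ᵥ M *ᵥ x).re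

lemma cross_conj {M : Matrix m m ℂ} (hM : M.IsHermitian) (x y : m → ℂ) :
    star y ⬝ᵥ M *ᵥ x = starRingEnd ℂ (star x ⬝ᵥ M *ᵥ y) := by
  have h1 : star (star x ⬝ᵥ M *ᵥ y) = star (M *ᵥ y) ⬝ᵥ x := by
    rw [star_dotProduct]; simp
  rw [show (starRingEnd ℂ) (star x ⬝ᵥ M *ᵥ y) = star (star x ⬝ᵥ M *ᵥ y) from rfl, h1,
    star_mulVec, ← dotProduct_mulVec, hM.eq]

lemma qf_smul (M : Matrix m m ℂ) (c : ℂ) (x : m → ℂ) :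
    qf M (c • x) = Complex.normSq c * qf M x := by
  unfold qf
  rw [mulVec_smul, star_smul, smul_dotProduct, dotProduct_smul]
  simp only [smul_eq_mul, RCLike.star_def, ← mul_assoc, Complex.conj_mul']
  rw [Complex.mul_re]
  simp [Complex.normSq_eq_norm_sq, ← Complex.ofReal_pow]

lemma qf_add {M : Matrix m m ℂ} (hM : M.IsHermitian) (x y : m → ℂ) :
    qf M (x + y) = qf M x + qf M y + 2 * (star x ⬝ᵥ M *ᵥ y).re := by
  unfold qf
  rw [star_add, mulVec_add, dotProduct_add, add_dotProduct, add_dotProduct]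
  rw [cross_conj hM x y]
  simp only [Complex.add_re, Complex.conj_re]
  ring

lemma qf_combo {M : Matrix m m ℂ} (hM : M.IsHermitian) (a b : ℝ) (z w : m → ℂ) :
    qf M ((a:ℂ) • z + (b:ℂ) • w)
      = a^2 * qf M z + b^2 * qf M w + 2*a*b*(star z ⬝ᵥ M *ᵥ w).re := by
  rw [qf_add hM, qf_smul, qf_smul]
  have : (star ((a:ℂ) • z) ⬝ᵥ M *ᵥ ((b:ℂ) • w)) = (a*b : ℂ) * (star z ⬝ᵥ M *ᵥ w) := by
    rw [mulVec_smul, star_smul, smul_dotProduct, dotProduct_smul]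
    simp [smul_eq_mul]; ring
  rw [this]
  simp only [Complex.normSq_ofReal, Complex.mul_re, Complex.ofReal_mul,
    Complex.ofReal_re, Complex.ofReal_im, Complex.ofReal_mul]
  push_cast
  simp
  ring

lemma qf_addM (M N : Matrix m m ℂ) (x : m → ℂ) : qf (M + N) x = qf M x + qf N x := by
  unfold qf
  rw [add_mulVec, dotProduct_add]
  simp

lemma qf_smulM (r : ℝ) (M : Matrix m m ℂ) (x : m → ℂ) :
    qf ((r:ℂ) • M) x = r * qf M x := by
  unfold qf
  rw [smul_mulVec, dotProduct_smul]
  simp [Complex.mul_re]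

set_option linter.unusedSectionVars false in
lemma hermitian_real_smul {M : Matrix m m ℂ} (hM : M.IsHermitian) (r : ℝ) :
    ((r:ℂ) • M).IsHermitian := by
  unfold Matrix.IsHermitian
  rw [conjTranspose_smul, hM.eq]
  congr 1
  simp

lemma unit_phase (c : ℂ) : ∃ u : ℂ, Complex.normSq u = 1 ∧ (u * c).re = 0 := by
  by_cases hc : c = 0
  · exact ⟨1, by simp, by simp [hc]⟩
  · refine ⟨Complex.I * (starRingEnd ℂ c / ‖c‖), ?_, ?_⟩
    · have hns : Complex.normSq c ≠ 0 := by
        simpa using (Complex.normSq_pos.mpr hc).ne'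
      rw [_root_.map_mul, map_div₀, Complex.normSq_conj, Complex.normSq_I, one_mul,
        Complex.normSq_ofReal]
      rw [show ‖c‖ * ‖c‖ = Complex.normSq c by rw [Complex.normSq_eq_norm_sq]; ring]
      exact div_self hns
    · have : Complex.I * (starRingEnd ℂ c / ‖c‖) * c
          = Complex.I * ((Complex.normSq c / ‖c‖ : ℝ) : ℂ) := by
        push_cast
        rw [Complex.normSq_eq_conj_mul_self]
        ring
      rw [this]
      simp

lemma ivt_pair {M₁ M₂ : Matrix m m ℂ} (h₁ : M₁.IsHermitian) (h₂ : M₂.IsHermitian)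
    (z w : m → ℂ) (hzw : qf M₁ z = qf M₁ w) (v : ℝ)
    (hv : v ∈ Set.uIcc (qf M₂ z) (qf M₂ w)) :
    ∃ x, qf M₁ x = qf M₁ z ∧ qf M₂ x = v := by
  obtain ⟨u, hu1, hu2⟩ := unit_phase (star z ⬝ᵥ M₁ *ᵥ w)
  set w' : m → ℂ := u • w with hw'
  have cross1 : (star z ⬝ᵥ M₁ *ᵥ w').re = 0 := by
    rw [hw', mulVec_smul, dotProduct_smul, smul_eq_mul, hu2]
  have hqw' : ∀ (M : Matrix m m ℂ), qf M w' = qf M w := by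
    intro M; rw [hw', qf_smul, hu1, one_mul]
  set r₂ : ℝ := (star z ⬝ᵥ M₂ *ᵥ w').re with hr₂
  have hden : ∀ s : ℝ, 0 < 1 - 2*s + 2*s^2 := by intro s; nlinarith [sq_nonneg (1 - 2*s), sq_nonneg s]
  set h : ℝ → ℝ := fun s =>
    ((1-s)^2 * qf M₂ z + s^2 * qf M₂ w + 2*(1-s)*s*r₂) / (1 - 2*s + 2*s^2) with hh
  have hcont : Continuous h := by
    apply Continuous.div (by continuity) (by continuity)
    intro s; exact (hden s).ne'
  have h0 : h 0 = qf M₂ z := by simp [hh]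
  have h1 : h 1 = qf M₂ w := by norm_num [hh]
  have hmem : v ∈ Set.uIcc (h 0) (h 1) := by rw [h0, h1]; exact hv
  obtain ⟨s, _, hs⟩ := intermediate_value_uIcc (hcont.continuousOn (s := Set.uIcc 0 1)) hmem
  set ρ : ℝ := Real.sqrt (1 - 2*s + 2*s^2)⁻¹ with hρ
  have hρ2 : ρ * ρ = (1 - 2*s + 2*s^2)⁻¹ := by
    rw [← sq]; exact Real.sq_sqrt (le_of_lt (inv_pos.mpr (hden s)))
  refine ⟨(ρ:ℂ) • (((1-s : ℝ):ℂ) • z + ((s:ℝ):ℂ) • w'), ?_, ?_⟩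
  · rw [qf_smul, qf_combo h₁, cross1, hqw' M₁, ← hzw]
    simp only [Complex.normSq_ofReal]
    rw [hρ2, inv_mul_eq_div]
    rw [div_eq_iff (hden s).ne']
    ring
  · rw [qf_smul, qf_combo h₂, hqw' M₂, ← hr₂]
    simp only [Complex.normSq_ofReal]
    rw [hρ2, inv_mul_eq_div]
    simpa [hh] using hs

lemma qf_sqrt_smul (M : Matrix m m ℂ) {r : ℝ} (hr : 0 ≤ r) (x : m → ℂ) :
    qf M ((Real.sqrt r : ℂ) • x) = r * qf M x := by
  rw [qf_smul, Complex.normSq_ofReal, Real.mul_self_sqrt hr]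

lemma two_point {M₁ M₂ : Matrix m m ℂ} (h₁ : M₁.IsHermitian) (h₂ : M₂.IsHermitian)
    (z w : m → ℂ) (θ : ℝ) (hθ0 : 0 ≤ θ) (hθ1 : θ ≤ 1) :
    ∃ x, qf M₁ x = θ * qf M₁ z + (1-θ) * qf M₁ w ∧
         qf M₂ x = θ * qf M₂ z + (1-θ) * qf M₂ w := by
  obtain ⟨a₁, ha₁⟩ : ∃ r, qf M₁ z = r := ⟨_, rfl⟩
  obtain ⟨a₂, ha₂⟩ : ∃ r, qf M₂ z = r := ⟨_, rfl⟩
  obtain ⟨b₁, hb₁⟩ : ∃ r, qf M₁ w = r := ⟨_, rfl⟩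
  obtain ⟨b₂, hb₂⟩ : ∃ r, qf M₂ w = r := ⟨_, rfl⟩
  rw [ha₁, ha₂, hb₁, hb₂]
  by_cases hd : a₁ * b₂ - a₂ * b₁ = 0
  · -- degenerate case
    by_cases ha : a₁ = 0 ∧ a₂ = 0
    · refine ⟨(Real.sqrt (1-θ) : ℂ) • w, ?_, ?_⟩ <;>
        rw [qf_sqrt_smul _ (by linarith : (0:ℝ) ≤ 1-θ)]
      · rw [hb₁, ha.1]; ring
      · rw [hb₂, ha.2]; ring
    · obtain ⟨μ, hbμ₁, hbμ₂⟩ : ∃ μ : ℝ, b₁ = μ * a₁ ∧ b₂ = μ * a₂ := by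
        by_cases h1 : a₁ = 0
        · have h2 : a₂ ≠ 0 := fun h => ha ⟨h1, h⟩
          refine ⟨b₂ / a₂, ?_, by field_simp⟩
          have hz1 : a₂ * b₁ = 0 := by rw [h1] at hd; linarith
          rcases mul_eq_zero.mp hz1 with h | h
          · exact absurd h h2
          · rw [h, h1]; ring
        · refine ⟨b₁ / a₁, by field_simp, ?_⟩
          field_simp
          nlinarith [hd]
      by_cases hνpos : 0 ≤ θ + (1-θ) * μ
      · refine ⟨(Real.sqrt (θ + (1-θ) * μ) : ℂ) • z, ?_, ?_⟩ <;>
          rw [qf_sqrt_smul _ hνpos]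
        · rw [ha₁, hbμ₁]; ring
        · rw [ha₂, hbμ₂]; ring
      · push_neg at hνpos
        have hμ : μ < 0 := by nlinarith
        have hνμ : 0 ≤ (θ + (1-θ) * μ) / μ :=
          le_of_lt (div_pos_of_neg_of_neg hνpos hμ)
        refine ⟨(Real.sqrt ((θ + (1-θ) * μ) / μ) : ℂ) • w, ?_, ?_⟩ <;>
          rw [qf_sqrt_smul _ hνμ]
        · rw [hb₁, hbμ₁, div_mul_eq_mul_div, div_eq_iff hμ.ne]; ring
        · rw [hb₂, hbμ₂, div_mul_eq_mul_div, div_eq_iff hμ.ne]; ring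
  · -- independent case
    have hqN : ∀ (α β : ℝ) (x : m → ℂ),
        qf ((α:ℂ) • M₁ + (β:ℂ) • M₂) x = α * qf M₁ x + β * qf M₂ x := by
      intro α β x; rw [qf_addM, qf_smulM, qf_smulM]
    have hN₁h : ((((b₂-a₂)/(a₁*b₂-a₂*b₁) : ℝ) : ℂ) • M₁
        + (((a₁-b₁)/(a₁*b₂-a₂*b₁) : ℝ) : ℂ) • M₂).IsHermitian :=
      (hermitian_real_smul h₁ _).add (hermitian_real_smul h₂ _)
    have hN₂h : ((((-a₂)/(a₁*b₂-a₂*b₁) : ℝ) : ℂ) • M₁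
        + ((a₁/(a₁*b₂-a₂*b₁) : ℝ) : ℂ) • M₂).IsHermitian :=
      (hermitian_real_smul h₁ _).add (hermitian_real_smul h₂ _)
    obtain ⟨N₁, hN₁⟩ : ∃ N, N = ((((b₂-a₂)/(a₁*b₂-a₂*b₁) : ℝ) : ℂ) • M₁
        + (((a₁-b₁)/(a₁*b₂-a₂*b₁) : ℝ) : ℂ) • M₂) := ⟨_, rfl⟩
    obtain ⟨N₂, hN₂⟩ : ∃ N, N = ((((-a₂)/(a₁*b₂-a₂*b₁) : ℝ) : ℂ) • M₁
        + ((a₁/(a₁*b₂-a₂*b₁) : ℝ) : ℂ) • M₂) := ⟨_, rfl⟩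
    rw [← hN₁] at hN₁h; rw [← hN₂] at hN₂h
    have e1 : qf N₁ z = 1 := by
      rw [hN₁, hqN, ha₁, ha₂]; rw [div_mul_eq_mul_div, div_mul_eq_mul_div, ← add_div,
        div_eq_one_iff_eq hd]; ring
    have e2 : qf N₁ w = 1 := by
      rw [hN₁, hqN, hb₁, hb₂]; rw [div_mul_eq_mul_div, div_mul_eq_mul_div, ← add_div,
        div_eq_one_iff_eq hd]; ring
    have e3 : qf N₂ z = 0 := by
      rw [hN₂, hqN, ha₁, ha₂]; field_simp; ring
    have e4 : qf N₂ w = 1 := by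
      rw [hN₂, hqN, hb₁, hb₂]; rw [div_mul_eq_mul_div, div_mul_eq_mul_div, ← add_div,
        div_eq_one_iff_eq hd]; ring
    have hv : (1-θ) ∈ Set.uIcc (qf N₂ z) (qf N₂ w) := by
      rw [e3, e4, Set.uIcc_of_le (by norm_num : (0:ℝ) ≤ 1)]
      constructor <;> linarith
    obtain ⟨x, hx1, hx2⟩ := ivt_pair hN₁h hN₂h z w (by rw [e1, e2]) (1-θ) hv
    rw [e1, hN₁, hqN] at hx1
    rw [hN₂, hqN] at hx2
    obtain ⟨u₁, hu₁⟩ : ∃ r, qf M₁ x = r := ⟨_, rfl⟩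
    obtain ⟨u₂, hu₂⟩ : ∃ r, qf M₂ x = r := ⟨_, rfl⟩
    rw [hu₁, hu₂] at hx1 hx2
    have hx1' : (b₂ - a₂) * u₁ + (a₁ - b₁) * u₂ = a₁*b₂ - a₂*b₁ := by
      rw [div_mul_eq_mul_div, div_mul_eq_mul_div, ← add_div, div_eq_one_iff_eq hd] at hx1
      linear_combination hx1
    have hx2' : -a₂ * u₁ + a₁ * u₂ = (1-θ) * (a₁*b₂ - a₂*b₁) := by
      field_simp at hx2
      refine mul_left_cancel₀ hd ?_
      linear_combination (a₁*b₂ - a₂*b₁) * hx2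
    refine ⟨x, ?_, ?_⟩
    · rw [hu₁]
      have key : (a₁*b₂-a₂*b₁) * u₁ = (a₁*b₂-a₂*b₁) * (θ * a₁ + (1-θ) * b₁) := by
        linear_combination a₁ * hx1' - (a₁ - b₁) * hx2'
      exact mul_left_cancel₀ hd key
    · rw [hu₂]
      have key : (a₁*b₂-a₂*b₁) * u₂ = (a₁*b₂-a₂*b₁) * (θ * a₂ + (1-θ) * b₂) := by
        linear_combination a₂ * hx1' + (b₂ - a₂) * hx2'
      exact mul_left_cancel₀ hd key

lemma qf_zero (M : Matrix m m ℂ) : qf M (0 : m → ℂ) = 0 := by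
  unfold qf; simp

lemma homog_s_lemma {M₁ M₂ : Matrix m m ℂ} (h₁ : M₁.IsHermitian) (h₂ : M₂.IsHermitian)
    (z₀ : m → ℂ) (hz₀ : qf M₁ z₀ < 0)
    (himp : ∀ x, qf M₁ x ≤ 0 → qf M₂ x ≤ 0) :
    ∃ κ : ℝ, 0 ≤ κ ∧ ∀ x, 0 ≤ κ * qf M₁ x - qf M₂ x := by
  classical
  set F : (m → ℂ) → ℝ × ℝ := fun x => (qf M₁ x, qf M₂ x) with hF
  set R : Set (ℝ × ℝ) := Set.range F with hR
  have hconv : Convex ℝ R := by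
    rintro p ⟨zp, rfl⟩ q ⟨zq, rfl⟩ α β hα hβ hαβ
    obtain ⟨x, hx1, hx2⟩ := two_point h₁ h₂ zp zq α hα (by linarith)
    refine ⟨x, ?_⟩
    have hβ' : β = 1 - α := by linarith
    rw [hF]
    simp only [Prod.ext_iff, Prod.smul_fst, Prod.smul_snd, Prod.fst_add, Prod.snd_add,
      smul_eq_mul]
    constructor
    · rw [hx1, hβ']; try ring
    · rw [hx2, hβ']; try ring
  set C : Set (ℝ × ℝ) := {p : ℝ × ℝ | p.1 < 0 ∧ 0 < p.2} with hC
  have hCopen : IsOpen C :=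
    (isOpen_lt continuous_fst continuous_const).inter (isOpen_lt continuous_const continuous_snd)
  have hCconv : Convex ℝ C := by
    rintro p ⟨hp1, hp2⟩ q ⟨hq1, hq2⟩ α β hα hβ hαβ
    constructor
    · rcases eq_or_lt_of_le hα with h | h
      · simp only [Prod.fst_add, Prod.smul_fst, smul_eq_mul]
        nlinarith
      · simp only [Prod.fst_add, Prod.smul_fst, smul_eq_mul]
        nlinarith
    · simp only [Prod.snd_add, Prod.smul_snd, smul_eq_mul]
      rcases eq_or_lt_of_le hα with h | h
      · nlinarith
      · nlinarith
  have hdisj : Disjoint C R := by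
    rw [Set.disjoint_left]
    rintro p ⟨hp1, hp2⟩ ⟨x, rfl⟩
    exact absurd (himp x (le_of_lt hp1)) (not_le.mpr hp2)
  obtain ⟨f, u, hfC, hfR⟩ := geometric_hahn_banach_open hCconv hCopen hconv hdisj
  have h0R : (0 : ℝ × ℝ) ∈ R := ⟨0, by rw [hF]; simp [qf_zero]⟩
  have hu0 : u ≤ 0 := by simpa using hfR 0 h0R
  set α : ℝ := f (1, 0) with hα
  set β : ℝ := f (0, 1) with hβ
  have hflin : ∀ p : ℝ × ℝ, f p = α * p.1 + β * p.2 := by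
    intro p
    have : p = p.1 • ((1:ℝ), (0:ℝ)) + p.2 • ((0:ℝ), (1:ℝ)) := by
      simp [Prod.ext_iff]
    conv_lhs => rw [this]
    rw [f.map_add, f.map_smul, f.map_smul, hα, hβ]
    simp [mul_comm]
  have hCmem : ∀ ε δ : ℝ, 0 < ε → 0 < δ → α * (-ε) + β * δ < 0 := by
    intro ε δ hε hδ
    have := hfC (-ε, δ) ⟨by simpa using hε, hδ⟩
    rw [hflin] at this
    exact lt_of_lt_of_le this hu0
  have hβle : β ≤ 0 := by
    by_contra h
    push_neg at h
    have hkey := hCmem 1 ((1 + |α|)/β) one_pos (by positivity)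
    have h2 : β * ((1 + |α|)/β) = 1 + |α| := by
      rw [mul_comm]; exact div_mul_cancel₀ _ (ne_of_gt h)
    nlinarith [abs_nonneg α, le_abs_self α, neg_abs_le α]
  have hαge : 0 ≤ α := by
    by_contra h
    push_neg at h
    have hna : (0:ℝ) < -α := by linarith
    have hkey := hCmem ((1 + |β|)/(-α)) 1 (div_pos (by positivity) hna) one_pos
    have h2 : α * (-((1 + |β|)/(-α))) = 1 + |β| := by
      rw [show α * (-((1 + |β|)/(-α))) = ((1 + |β|)/(-α)) * (-α) by ring]
      exact div_mul_cancel₀ _ (ne_of_gt hna)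
    nlinarith [abs_nonneg β, le_abs_self β, neg_abs_le β]
  have hfR0 : ∀ x, 0 ≤ α * qf M₁ x + β * qf M₂ x := by
    intro x
    by_contra h
    push_neg at h
    set v : ℝ := α * qf M₁ x + β * qf M₂ x with hv
    have hvneg : v < 0 := h
    have hnv : (0:ℝ) < -v := by linarith
    set r : ℝ := (|u| + 1)/(-v) with hr
    have hrpos : 0 < r := div_pos (by positivity) hnv
    have hmem : F ((Real.sqrt r : ℂ) • x) ∈ R := ⟨_, rfl⟩
    have := hfR _ hmem
    rw [hF] at this
    simp only at this
    rw [qf_sqrt_smul _ hrpos.le, qf_sqrt_smul _ hrpos.le, hflin] at this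
    simp only at this
    have hcalc : α * (r * qf M₁ x) + β * (r * qf M₂ x) = r * v := by rw [hv]; ring
    rw [hcalc] at this
    have h2 : r * v = -(|u| + 1) := by
      rw [hr, div_mul_eq_mul_div, div_eq_iff (ne_of_gt hnv)]
      ring
    nlinarith [abs_nonneg u, le_abs_self u, neg_abs_le u]
  have hβne : β < 0 := by
    rcases lt_or_eq_of_le hβle with h | h
    · exact h
    · exfalso
      have hα0 : α ≠ 0 := by
        intro h0
        have hk := hCmem 1 1 one_pos one_pos
        rw [h0, h] at hk
        norm_num at hk
      have hk := hfR0 z₀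
      rw [h] at hk
      rcases lt_or_eq_of_le hαge with hh | hh
      · nlinarith
      · exact hα0 hh.symm
  have hnb : (0:ℝ) < -β := by linarith
  refine ⟨α / (-β), div_nonneg hαge hnb.le, ?_⟩
  intro x
  have h1 := hfR0 x
  have h2 : α / (-β) * qf M₁ x - qf M₂ x = (α * qf M₁ x + β * qf M₂ x) / (-β) := by
    have hb0 : β ≠ 0 := by intro hh; rw [hh] at hnb; norm_num at hnb
    rw [eq_div_iff (ne_of_gt hnb)]
    field_simp [hb0]
    ring
  rw [h2]
  exact div_nonneg h1 hnb.le

lemma blockQuad_herm {n : ℕ} {A : Matrix (Fin n) (Fin n) ℂ} (hA : A.IsHermitian)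
    (b : Fin n → ℂ) (c : ℝ) : (blockQuad A b c).IsHermitian := by
  have hB : (Matrix.of fun (_ : Unit) j => star (b j))ᴴ
      = Matrix.of fun i (_ : Unit) => b i := by
    ext i u; simp [conjTranspose_apply]
  have hC : (Matrix.of fun i (_ : Unit) => b i)ᴴ
      = Matrix.of fun (_ : Unit) j => star (b j) := by
    ext u j; simp [conjTranspose_apply]
  have hD : (Matrix.of fun (_ : Unit) (_ : Unit) => (c:ℂ))ᴴ
      = Matrix.of fun (_ : Unit) (_ : Unit) => (c:ℂ) := by
    ext u v; simp [conjTranspose_apply, Complex.conj_ofReal]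
  rw [Matrix.IsHermitian, blockQuad, fromBlocks_conjTranspose, hB, hC, hD, hA.eq]

lemma qf_block {n : ℕ} (A : Matrix (Fin n) (Fin n) ℂ) (b : Fin n → ℂ) (c : ℝ)
    (t : Fin n → ℂ) (τ : ℂ) :
    star (Sum.elim t (fun _ : Unit => τ)) ⬝ᵥ (blockQuad A b c) *ᵥ (Sum.elim t (fun _ => τ))
      = star t ⬝ᵥ A *ᵥ t + τ * (star t ⬝ᵥ b) + (starRingEnd ℂ) τ * (star b ⬝ᵥ t)
        + (c:ℂ) * ((starRingEnd ℂ) τ * τ) := by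
  have hstar : star (Sum.elim t (fun _ : Unit => τ))
      = Sum.elim (star t) (fun _ : Unit => (starRingEnd ℂ) τ) := by
    funext i; cases i <;> rfl
  have h1 : (Matrix.of fun i (_ : Unit) => b i) *ᵥ (fun _ => τ) = τ • b := by
    funext i; simp [Matrix.mulVec, dotProduct, mul_comm]
  have h2 : (Matrix.of fun (_ : Unit) j => star (b j)) *ᵥ t = fun _ => star b ⬝ᵥ t := by
    funext u; simp [Matrix.mulVec, dotProduct]
  have h3 : (Matrix.of fun (_ : Unit) (_ : Unit) => (c:ℂ)) *ᵥ (fun _ => τ)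
      = fun _ : Unit => (c:ℂ) * τ := by
    funext u; simp [Matrix.mulVec, dotProduct]
  rw [blockQuad, hstar, fromBlocks_mulVec]
  simp only [Sum.elim_comp_inl, Sum.elim_comp_inr]
  rw [sumElim_dotProduct_sumElim, h1, h2, h3,
    dotProduct_add, dotProduct_add, dotProduct_smul]
  have h4 : (fun _ : Unit => (starRingEnd ℂ) τ) ⬝ᵥ (fun _ : Unit => star b ⬝ᵥ t)
      = (starRingEnd ℂ) τ * (star b ⬝ᵥ t) := by
    simp [dotProduct]
  have h5 : (fun _ : Unit => (starRingEnd ℂ) τ) ⬝ᵥ (fun _ : Unit => (c:ℂ) * τ)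
      = (c:ℂ) * ((starRingEnd ℂ) τ * τ) := by
    simp [dotProduct]; ring
  rw [h4, h5]
  simp only [smul_eq_mul]
  ring

lemma qf_block_re {n : ℕ} (A : Matrix (Fin n) (Fin n) ℂ) (b : Fin n → ℂ) (c : ℝ)
    (t : Fin n → ℂ) (τ : ℂ) :
    qf (blockQuad A b c) (Sum.elim t (fun _ : Unit => τ))
      = (star t ⬝ᵥ A *ᵥ t).re + 2 * ((starRingEnd ℂ) τ * (star b ⬝ᵥ t)).re
        + c * Complex.normSq τ := by
  unfold qf
  rw [qf_block]
  have hconj : star t ⬝ᵥ b = (starRingEnd ℂ) (star b ⬝ᵥ t) := by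
    rw [show ((starRingEnd ℂ) (star b ⬝ᵥ t)) = star (star b ⬝ᵥ t) from rfl, star_dotProduct]
    try simp
  have : τ * (star t ⬝ᵥ b) = (starRingEnd ℂ) ((starRingEnd ℂ) τ * (star b ⬝ᵥ t)) := by
    rw [hconj, _root_.map_mul]
    try simp
  rw [this]
  have hns : (c:ℂ) * ((starRingEnd ℂ) τ * τ) = ((c * Complex.normSq τ : ℝ) : ℂ) := by
    rw [← Complex.normSq_eq_conj_mul_self]
    push_cast
    ring
  rw [hns]
  simp
  ring

lemma ray_aux (p₁ L₁ Q₁ p₂ L₂ Q₂ : ℝ) (hp₁ : p₁ < 0) (hQ₁ : Q₁ ≤ 0)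
    (himp : ∀ s : ℝ, p₁ + 2*s*L₁ + s^2*Q₁ ≤ 0 → p₂ + 2*s*L₂ + s^2*Q₂ ≤ 0) : Q₂ ≤ 0 := by
  by_contra hQ₂
  push_neg at hQ₂
  set σ : ℝ := if L₁ ≤ 0 then 1 else -1 with hσ
  have hσ2 : σ^2 = 1 := by rw [hσ]; split <;> norm_num
  have hσL : σ * L₁ ≤ 0 := by
    rw [hσ]; split
    · simpa
    · push_neg at *; nlinarith
  have hall : ∀ s : ℝ, 0 ≤ s → p₂ + 2*(σ*s)*L₂ + s^2*Q₂ ≤ 0 := by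
    intro s hs
    have h1 : p₁ + 2*(σ*s)*L₁ + (σ*s)^2*Q₁ ≤ 0 := by
      have : (σ*s)^2 = σ^2 * s^2 := by ring
      rw [this, hσ2]
      nlinarith [mul_nonneg hs (neg_nonneg.mpr hσL), mul_nonneg (sq_nonneg s) (neg_nonneg.mpr hQ₁)]
    have := himp (σ*s) h1
    calc p₂ + 2*(σ*s)*L₂ + s^2*Q₂ = p₂ + 2*(σ*s)*L₂ + (σ*s)^2*Q₂ := by
          rw [show (σ*s)^2 = σ^2*s^2 by ring, hσ2]; ring
      _ ≤ 0 := this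
  set s₀ : ℝ := max ((1 + |p₂| + 2*|L₂|)/Q₂) (1 + |p₂| + 2*|L₂|) with hs₀
  have hs₀1 : 1 + |p₂| + 2*|L₂| ≤ s₀ := le_max_right _ _
  have hs₀2 : (1 + |p₂| + 2*|L₂|)/Q₂ ≤ s₀ := le_max_left _ _
  have hs₀pos : 0 < s₀ := by
    have : (0:ℝ) < 1 + |p₂| + 2*|L₂| := by positivity
    linarith
  have hkey := hall s₀ hs₀pos.le
  have hσs : 2*(σ*s₀)*L₂ ≥ -(2*s₀*|L₂|) := by
    have h1 : σ * L₂ ≥ -|L₂| := by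
      rw [hσ]; split
      · nlinarith [neg_abs_le L₂, le_abs_self L₂]
      · nlinarith [neg_abs_le L₂, le_abs_self L₂]
    nlinarith [hs₀pos]
  have hsq : s₀^2 * Q₂ ≥ s₀ * (1 + |p₂| + 2*|L₂|) := by
    have h1 : s₀ * Q₂ ≥ 1 + |p₂| + 2*|L₂| := by
      have := mul_le_mul_of_nonneg_right hs₀2 (le_of_lt hQ₂)
      rw [div_mul_cancel₀ _ (ne_of_gt hQ₂)] at this
      nlinarith
    nlinarith [hs₀pos]
  have hs1 : (1:ℝ) ≤ s₀ := by nlinarith [abs_nonneg p₂, abs_nonneg L₂]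
  have hp : |p₂| ≤ s₀ * |p₂| := by nlinarith [abs_nonneg p₂]
  have hsq' : s₀^2 * Q₂ ≥ s₀ + s₀*|p₂| + 2*(s₀*|L₂|) := by nlinarith [hsq]
  have hσs' : 2*(σ*s₀)*L₂ ≥ -(2*(s₀*|L₂|)) := by nlinarith [hσs]
  linarith [hkey, hσs', hsq', neg_abs_le p₂, hp, hs1]

lemma qf_sub_smul {m : Type*} [Fintype m] (κ : ℝ) (M₁ M₂ : Matrix m m ℂ) (x : m → ℂ) :
    (star x ⬝ᵥ ((κ:ℂ) • M₁ - M₂) *ᵥ x).re = κ * qf M₁ x - qf M₂ x := by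
  rw [sub_mulVec, dotProduct_sub, smul_mulVec, dotProduct_smul]
  unfold qf
  simp [Complex.sub_re, smul_eq_mul, Complex.mul_re]

end Aux

/-- S-procedure lemma (Lemma 1). -/
theorem s_procedure (n : ℕ) (hn : 1 ≤ n)
    (A₁ A₂ : Matrix (Fin n) (Fin n) ℂ) (hA₁ : A₁.IsHermitian) (hA₂ : A₂.IsHermitian)
    (b₁ b₂ : Fin n → ℂ) (c₁ c₂ : ℝ)
    (f₁ f₂ : (Fin n → ℂ) → ℝ)
    (hf₁ : ∀ t, f₁ t = (star t ⬝ᵥ A₁ *ᵥ t).re + 2 * (star b₁ ⬝ᵥ t).re + c₁)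
    (hf₂ : ∀ t, f₂ t = (star t ⬝ᵥ A₂ *ᵥ t).re + 2 * (star b₂ ⬝ᵥ t).re + c₂)
    (hfeas : ∃ t₀, f₁ t₀ < 0) :
    (∀ t, f₁ t ≤ 0 → f₂ t ≤ 0) ↔
    ∃ κ : ℝ, 0 ≤ κ ∧
      ((κ : ℂ) • blockQuad A₁ b₁ c₁ - blockQuad A₂ b₂ c₂).PosSemidef := by
  have hB₁h : (blockQuad A₁ b₁ c₁).IsHermitian := blockQuad_herm hA₁ b₁ c₁
  have hB₂h : (blockQuad A₂ b₂ c₂).IsHermitian := blockQuad_herm hA₂ b₂ c₂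
  have hfq₁ : ∀ t, f₁ t = qf (blockQuad A₁ b₁ c₁) (Sum.elim t fun _ : Unit => (1:ℂ)) := by
    intro t; rw [hf₁, qf_block_re]; simp
  have hfq₂ : ∀ t, f₂ t = qf (blockQuad A₂ b₂ c₂) (Sum.elim t fun _ : Unit => (1:ℂ)) := by
    intro t; rw [hf₂, qf_block_re]; simp
  have helim : ∀ x : Fin n ⊕ Unit → ℂ,
      x = Sum.elim (fun i => x (Sum.inl i)) (fun _ : Unit => x (Sum.inr ())) := by
    intro x; funext i
    rcases i with i | u
    · rfl
    · cases u; rfl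
  have hscale : ∀ (t : Fin n → ℂ) (τ : ℂ), τ ≠ 0 →
      Sum.elim t (fun _ : Unit => τ) = τ • Sum.elim (τ⁻¹ • t) (fun _ : Unit => (1:ℂ)) := by
    intro t τ hτ; funext i
    rcases i with i | u
    · show t i = τ * (τ⁻¹ * t i)
      field_simp
    · show τ = τ * 1
      ring
  constructor
  · intro himp
    obtain ⟨t₀, ht₀⟩ := hfeas
    have hhom : ∀ x, qf (blockQuad A₁ b₁ c₁) x ≤ 0 → qf (blockQuad A₂ b₂ c₂) x ≤ 0 := by
      intro x hx
      rw [helim x] at hx ⊢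
      by_cases hτ : x (Sum.inr ()) = 0
      · rw [hτ] at hx ⊢
        set t : Fin n → ℂ := fun i => x (Sum.inl i)
        set y : Fin n ⊕ Unit → ℂ := Sum.elim t (fun _ : Unit => (0:ℂ)) with hy
        set z₀ : Fin n ⊕ Unit → ℂ := Sum.elim t₀ (fun _ : Unit => (1:ℂ)) with hz₀
        have hysum : ∀ s : ℝ, Sum.elim (t₀ + (s:ℂ) • t) (fun _ : Unit => (1:ℂ))
            = z₀ + (s:ℂ) • y := by
          intro s; funext i
          rcases i with i | u
          · show t₀ i + (s:ℂ) * t i = z₀ (Sum.inl i) + (s:ℂ) * y (Sum.inl i)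
            rw [hy, hz₀]; rfl
          · show (1:ℂ) = z₀ (Sum.inr u) + (s:ℂ) * y (Sum.inr u)
            rw [hy, hz₀]; simp
        have hexp : ∀ (M : Matrix (Fin n ⊕ Unit) (Fin n ⊕ Unit) ℂ), M.IsHermitian →
            ∀ s : ℝ, qf M (z₀ + (s:ℂ) • y)
              = qf M z₀ + 2*s*(star z₀ ⬝ᵥ M *ᵥ y).re + s^2 * qf M y := by
          intro M hM s
          have := qf_combo hM 1 s z₀ y
          rw [show ((1:ℝ):ℂ) = 1 by norm_num, one_smul] at this
          rw [this]; ring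
        apply ray_aux (f₁ t₀) ((star z₀ ⬝ᵥ (blockQuad A₁ b₁ c₁) *ᵥ y).re)
          (qf (blockQuad A₁ b₁ c₁) y) (f₂ t₀) ((star z₀ ⬝ᵥ (blockQuad A₂ b₂ c₂) *ᵥ y).re)
          (qf (blockQuad A₂ b₂ c₂) y) ht₀ hx
        intro s hs
        have hsf : f₁ (t₀ + (s:ℂ) • t) ≤ 0 := by
          rw [hfq₁, hysum s, hexp _ hB₁h s, ← hfq₁]
          linarith [hs]
        have := himp _ hsf
        rw [hfq₂, hysum s, hexp _ hB₂h s, ← hfq₂] at this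
        linarith [this]
      · rw [hscale _ _ hτ] at hx ⊢
        rw [qf_smul] at hx ⊢
        have hν : 0 < Complex.normSq (x (Sum.inr ())) := Complex.normSq_pos.mpr hτ
        have h1 : qf (blockQuad A₁ b₁ c₁)
            (Sum.elim ((x (Sum.inr ()))⁻¹ • fun i => x (Sum.inl i)) (fun _ : Unit => (1:ℂ))) ≤ 0 := by
          nlinarith [hx, hν]
        have h2 := himp _ (by rw [hfq₁]; exact h1)
        rw [hfq₂] at h2
        exact mul_nonpos_of_nonneg_of_nonpos hν.le h2
    obtain ⟨κ, hκ, hq⟩ := homog_s_lemma hB₁h hB₂h (Sum.elim t₀ fun _ : Unit => (1:ℂ))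
      (by rw [← hfq₁]; exact ht₀) hhom
    refine ⟨κ, hκ, posSemidef_iff_dotProduct_mulVec.mpr ⟨?_, ?_⟩⟩
    · exact (hermitian_real_smul hB₁h κ).sub hB₂h
    · intro x
      have hre : (star x ⬝ᵥ ((κ:ℂ) • blockQuad A₁ b₁ c₁ - blockQuad A₂ b₂ c₂) *ᵥ x).re
          = κ * qf (blockQuad A₁ b₁ c₁) x - qf (blockQuad A₂ b₂ c₂) x := qf_sub_smul κ _ _ x
      have hherm : ((κ:ℂ) • blockQuad A₁ b₁ c₁ - blockQuad A₂ b₂ c₂).IsHermitian :=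
        (hermitian_real_smul hB₁h κ).sub hB₂h
      have hselfadj := cross_conj hherm x x
      have him : (star x ⬝ᵥ ((κ:ℂ) • blockQuad A₁ b₁ c₁ - blockQuad A₂ b₂ c₂) *ᵥ x).im = 0 := by
        have h2 := congrArg Complex.im hselfadj
        rw [Complex.conj_im] at h2
        linarith
      rw [Complex.le_def]
      refine ⟨by rw [Complex.zero_re, hre]; exact hq x, by rw [Complex.zero_im, him]⟩
  · rintro ⟨κ, hκ, hherm, hpsd⟩ t hft
    have := (posSemidef_iff_dotProduct_mulVec.mp ⟨hherm, hpsd⟩).2 (Sum.elim t fun _ : Unit => (1:ℂ))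
    rw [Complex.le_def] at this
    have h1 := this.1
    rw [Complex.zero_re, qf_sub_smul] at h1
    rw [hfq₁] at hft
    rw [hfq₂]
    nlinarith [mul_nonpos_of_nonneg_of_nonpos hκ hft, h1]
end

section
/- Let K ∈ ℕ and e : Fin K → ℝ. Then (for every k, e(k) = 0 or e(k) = 1) if and only if (Σ_{k} (e(k) − e(k)²) ≤ 0 and for every k, 0 ≤ e(k) ≤ 1). -/
/-! On `[0, 1]` the penalty `x - x²` = `x (1 - x)` is nonnegative and vanishes exactly at `0` and `1`,
so a sum of such penalties is `≤ 0` precisely when every term vanishes. -/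

open Finset

theorem sub_sq_eq_zero_iff {R : Type*} [Ring R] [NoZeroDivisors R] {x : R} :
    x - x ^ 2 = 0 ↔ x = 0 ∨ x = 1 := by
  rw [sub_eq_zero, eq_comm, sq, ← IsIdempotentElem, IsIdempotentElem.iff_eq_zero_or_one]

section Ordered

variable {R : Type*} [Ring R] [LinearOrder R] [IsStrictOrderedRing R]

theorem sub_sq_nonneg_of_mem_Icc {x : R} (h₀ : 0 ≤ x) (h₁ : x ≤ 1) : 0 ≤ x - x ^ 2 := by
  rw [show x - x ^ 2 = x * (1 - x) by noncomm_ring]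
  exact mul_nonneg h₀ (sub_nonneg.mpr h₁)

theorem sum_sub_sq_nonpos_iff {ι : Type*} [Fintype ι] {e : ι → R}
    (he : ∀ k, 0 ≤ e k ∧ e k ≤ 1) :
    ∑ k, (e k - e k ^ 2) ≤ 0 ↔ ∀ k, e k = 0 ∨ e k = 1 := by
  have hnonneg : ∀ k ∈ univ, 0 ≤ e k - e k ^ 2 :=
    fun k _ ↦ sub_sq_nonneg_of_mem_Icc (he k).1 (he k).2
  rw [(sum_nonneg hnonneg).ge_iff_eq', sum_eq_zero_iff_of_nonneg hnonneg]
  simp only [mem_univ, true_implies, sub_sq_eq_zero_iff]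

end Ordered

/-- Equivalence of the binary scheduling constraint C3 with the pair of continuous
constraints C3a and C3b. -/
theorem binary_iff_penalty_constraints (K : ℕ) (e : Fin K → ℝ) :
    (∀ k, e k = 0 ∨ e k = 1) ↔
      ((∑ k, (e k - (e k) ^ 2)) ≤ 0 ∧ ∀ k, 0 ≤ e k ∧ e k ≤ 1) := by
  constructor
  · intro hbin
    have hbox : ∀ k, 0 ≤ e k ∧ e k ≤ 1 := fun k ↦ by
      rcases hbin k with h | h <;> simp [h]
    exact ⟨(sum_sub_sq_nonpos_iff hbox).mpr hbin, hbox⟩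
  · rintro ⟨hsum, hbox⟩
    exact (sum_sub_sq_nonpos_iff hbox).mp hsum
end

section
/- Let e ∈ {0, 1} ⊆ ℝ, let P > 0 be a real number, and let W be an n×n complex matrix that is positive semidefinite and satisfies W ⪯ P·I. Then an n×n complex matrix W̄ satisfies the four constraints (C7a) W̄ ⪯ e·P·I, (C7b) W̄ ⪰ W − (1−e)·P·I, (C7c) W̄ ⪯ W, (C7d) W̄ ⪰ 0, if and only if W̄ = e·W. -/
open Matrix
open scoped ComplexOrder

lemma psd_and_psd_neg_eq_zero {n : ℕ} {A : Matrix (Fin n) (Fin n) ℂ}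
    (hA : A.PosSemidef) (hA' : (-A).PosSemidef) : A = 0 := by
  have hvec : ∀ x : Fin n → ℂ, A *ᵥ x = 0 := by
    intro x
    rw [← hA.dotProduct_mulVec_zero_iff x]
    have h1 := hA.dotProduct_mulVec_nonneg x
    have h2 := hA'.dotProduct_mulVec_nonneg x
    rw [neg_mulVec, dotProduct_neg] at h2
    have := neg_nonneg.mp h2
    exact le_antisymm this h1
  ext i j
  have := congrFun (hvec (Pi.single j 1)) i
  simpa [mulVec_single] using this

/-- Big-M linearization of the product of a binary variable with a PSD beamforming
matrix (constraints C7a–C7d): `W̄` satisfies the four semidefinite constraints iff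
`W̄ = e·W`. -/
theorem bigM_linearization_binary_matrix {n : ℕ} (e : ℝ) (he : e = 0 ∨ e = 1)
    (P : ℝ) (hP : 0 < P) (W : Matrix (Fin n) (Fin n) ℂ) (hW : W.PosSemidef)
    (hWP : (((P : ℂ) • (1 : Matrix (Fin n) (Fin n) ℂ)) - W).PosSemidef)
    (Wbar : Matrix (Fin n) (Fin n) ℂ) :
    ((((e * P : ℝ) : ℂ) • (1 : Matrix (Fin n) (Fin n) ℂ) - Wbar).PosSemidef ∧
        (Wbar - (W - (((1 - e) * P : ℝ) : ℂ) • (1 : Matrix (Fin n) (Fin n) ℂ))).PosSemidef ∧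
        (W - Wbar).PosSemidef ∧
        Wbar.PosSemidef) ↔
      Wbar = ((e : ℝ) : ℂ) • W := by
  rcases he with rfl | rfl
  · simp only [zero_mul, Complex.ofReal_zero, zero_smul, zero_sub, sub_zero]
    constructor
    · rintro ⟨h1, h2, h3, h4⟩
      exact psd_and_psd_neg_eq_zero h4 h1
    · rintro rfl
      refine ⟨by simpa using Matrix.PosSemidef.zero, ?_, by simpa using hW,
        Matrix.PosSemidef.zero⟩
      simpa [sub_eq_add_neg, neg_sub] using hWP
  · simp only [one_mul, Complex.ofReal_one, one_smul, sub_self, Complex.ofReal_zero, zero_smul,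
      sub_zero]
    constructor
    · rintro ⟨h1, h2, h3, h4⟩
      have : W - Wbar = 0 := by
        apply psd_and_psd_neg_eq_zero h3
        simpa [neg_sub] using h2
      linear_combination (norm := module) -this
    · rintro rfl
      exact ⟨hWP, by simpa using Matrix.PosSemidef.zero, by simpa using Matrix.PosSemidef.zero, hW⟩
end

section
/- Let e₁, e₂ ∈ {0, 1} ⊆ ℝ, let P > 0 be a real number, and let W be an n×n complex matrix that is positive semidefinite and satisfies W ⪯ P·I. Then an n×n complex matrix W̄ satisfies the five constraints (C9a) W̄ ⪯ e₁·P·I, (C9b) W̄ ⪯ e₂·P·I, (C9c) W̄ ⪰ W − (2−e₁−e₂)·P·I, (C9d) W̄ ⪯ W, (C9e) W̄ ⪰ 0, if and only if W̄ = e₁·e₂·W. -/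
open Matrix
open scoped ComplexOrder

private lemma smul_one_psd {n : ℕ} (c : ℝ) (hc : 0 ≤ c) :
    ((c : ℂ) • (1 : Matrix (Fin n) (Fin n) ℂ)).PosSemidef := by
  refine .of_dotProduct_mulVec_nonneg ?_ (fun x => ?_)
  · unfold Matrix.IsHermitian
    rw [conjTranspose_smul, conjTranspose_one]
    simp [Complex.conj_ofReal]
  · rw [smul_mulVec, one_mulVec, dotProduct_smul, smul_eq_mul]
    exact mul_nonneg (by exact_mod_cast hc) (dotProduct_star_self_nonneg x)

private lemma psd_antisymm {n : ℕ} {A : Matrix (Fin n) (Fin n) ℂ}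
    (h1 : A.PosSemidef) (h2 : (-A).PosSemidef) : A = 0 := by
  have hx : ∀ x, A *ᵥ x = 0 := fun x => by
    refine (h1.dotProduct_mulVec_zero_iff x).mp (le_antisymm ?_ (h1.dotProduct_mulVec_nonneg x))
    have := h2.dotProduct_mulVec_nonneg x
    rw [neg_mulVec, dotProduct_neg] at this
    exact neg_nonneg.mp (by simpa using this)
  ext i j
  have := congrFun (hx (Pi.single j 1)) i
  simpa [mulVec_single] using this

/-- Linearization of the product of two binary variables with a PSD beamforming
matrix (constraints C9a–C9e): `W̄` satisfies the five semidefinite constraints iff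
`W̄ = e₁·e₂·W`. -/
theorem bigM_linearization_two_binaries_matrix {n : ℕ}
    (e₁ e₂ : ℝ) (he₁ : e₁ = 0 ∨ e₁ = 1) (he₂ : e₂ = 0 ∨ e₂ = 1)
    (P : ℝ) (hP : 0 < P) (W : Matrix (Fin n) (Fin n) ℂ) (hW : W.PosSemidef)
    (hWP : (((P : ℂ) • (1 : Matrix (Fin n) (Fin n) ℂ)) - W).PosSemidef)
    (Wbar : Matrix (Fin n) (Fin n) ℂ) :
    ((((e₁ * P : ℝ) : ℂ) • (1 : Matrix (Fin n) (Fin n) ℂ) - Wbar).PosSemidef ∧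
        (((e₂ * P : ℝ) : ℂ) • (1 : Matrix (Fin n) (Fin n) ℂ) - Wbar).PosSemidef ∧
        (Wbar - (W - (((2 - e₁ - e₂) * P : ℝ) : ℂ) • (1 : Matrix (Fin n) (Fin n) ℂ))).PosSemidef ∧
        (W - Wbar).PosSemidef ∧
        Wbar.PosSemidef) ↔
      Wbar = ((e₁ * e₂ : ℝ) : ℂ) • W := by
  constructor
  · rintro ⟨ha, hb, hc, hd, he⟩
    rcases he₁ with rfl | rfl
    · -- e₁ = 0 : Wbar = 0
      have h0 : Wbar = 0 := by
        refine psd_antisymm he ?_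
        have : (((0 * P : ℝ) : ℂ) • (1 : Matrix (Fin n) (Fin n) ℂ) - Wbar) = -Wbar := by
          push_cast; module
        rwa [this] at ha
      rw [h0]; push_cast; module
    · rcases he₂ with rfl | rfl
      · -- e₂ = 0 : Wbar = 0
        have h0 : Wbar = 0 := by
          refine psd_antisymm he ?_
          have : (((0 * P : ℝ) : ℂ) • (1 : Matrix (Fin n) (Fin n) ℂ) - Wbar) = -Wbar := by
            push_cast; module
          rwa [this] at hb
        rw [h0]; push_cast; module
      · -- e₁ = e₂ = 1 : Wbar = W
        have h0 : Wbar - W = 0 := by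
          refine psd_antisymm ?_ ?_
          · have : (Wbar - (W - (((2 - 1 - 1) * P : ℝ) : ℂ) •
                (1 : Matrix (Fin n) (Fin n) ℂ))) = Wbar - W := by
              push_cast; module
            rwa [this] at hc
          · have : (W - Wbar) = -(Wbar - W) := by module
            rwa [this] at hd
        have : Wbar = W := by rwa [sub_eq_zero] at h0
        rw [this]; push_cast; module
  · rintro rfl
    rcases he₁ with rfl | rfl <;> rcases he₂ with rfl | rfl
    · refine ⟨?_, ?_, ?_, ?_, ?_⟩
      · have h : (((0 * P : ℝ) : ℂ) • (1 : Matrix (Fin n) (Fin n) ℂ) -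
            ((0 * 0 : ℝ) : ℂ) • W) = 0 := by push_cast; module
        rw [h]; exact .zero
      · have h : (((0 * P : ℝ) : ℂ) • (1 : Matrix (Fin n) (Fin n) ℂ) -
            ((0 * 0 : ℝ) : ℂ) • W) = 0 := by push_cast; module
        rw [h]; exact .zero
      · have h : (((0 * 0 : ℝ) : ℂ) • W - (W - (((2 - 0 - 0) * P : ℝ) : ℂ) •
            (1 : Matrix (Fin n) (Fin n) ℂ))) =
            (((P : ℂ) • (1 : Matrix (Fin n) (Fin n) ℂ)) - W) +
            (P : ℂ) • (1 : Matrix (Fin n) (Fin n) ℂ) := by push_cast; module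
        rw [h]; exact hWP.add (smul_one_psd P hP.le)
      · have h : (W - ((0 * 0 : ℝ) : ℂ) • W) = W := by push_cast; module
        rw [h]; exact hW
      · have h : (((0 * 0 : ℝ) : ℂ) • W) = 0 := by push_cast; module
        rw [h]; exact .zero
    · refine ⟨?_, ?_, ?_, ?_, ?_⟩
      · have h : (((0 * P : ℝ) : ℂ) • (1 : Matrix (Fin n) (Fin n) ℂ) -
            ((0 * 1 : ℝ) : ℂ) • W) = 0 := by push_cast; module
        rw [h]; exact .zero
      · have h : (((1 * P : ℝ) : ℂ) • (1 : Matrix (Fin n) (Fin n) ℂ) -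
            ((0 * 1 : ℝ) : ℂ) • W) = (P : ℂ) • (1 : Matrix (Fin n) (Fin n) ℂ) := by
          push_cast; module
        rw [h]; exact smul_one_psd P hP.le
      · have h : (((0 * 1 : ℝ) : ℂ) • W - (W - (((2 - 0 - 1) * P : ℝ) : ℂ) •
            (1 : Matrix (Fin n) (Fin n) ℂ))) =
            (((P : ℂ) • (1 : Matrix (Fin n) (Fin n) ℂ)) - W) := by push_cast; module
        rw [h]; exact hWP
      · have h : (W - ((0 * 1 : ℝ) : ℂ) • W) = W := by push_cast; module
        rw [h]; exact hW
      · have h : (((0 * 1 : ℝ) : ℂ) • W) = 0 := by push_cast; module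
        rw [h]; exact .zero
    · refine ⟨?_, ?_, ?_, ?_, ?_⟩
      · have h : (((1 * P : ℝ) : ℂ) • (1 : Matrix (Fin n) (Fin n) ℂ) -
            ((1 * 0 : ℝ) : ℂ) • W) = (P : ℂ) • (1 : Matrix (Fin n) (Fin n) ℂ) := by
          push_cast; module
        rw [h]; exact smul_one_psd P hP.le
      · have h : (((0 * P : ℝ) : ℂ) • (1 : Matrix (Fin n) (Fin n) ℂ) -
            ((1 * 0 : ℝ) : ℂ) • W) = 0 := by push_cast; module
        rw [h]; exact .zero
      · have h : (((1 * 0 : ℝ) : ℂ) • W - (W - (((2 - 1 - 0) * P : ℝ) : ℂ) •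
            (1 : Matrix (Fin n) (Fin n) ℂ))) =
            (((P : ℂ) • (1 : Matrix (Fin n) (Fin n) ℂ)) - W) := by push_cast; module
        rw [h]; exact hWP
      · have h : (W - ((1 * 0 : ℝ) : ℂ) • W) = W := by push_cast; module
        rw [h]; exact hW
      · have h : (((1 * 0 : ℝ) : ℂ) • W) = 0 := by push_cast; module
        rw [h]; exact .zero
    · refine ⟨?_, ?_, ?_, ?_, ?_⟩
      · have h : (((1 * P : ℝ) : ℂ) • (1 : Matrix (Fin n) (Fin n) ℂ) -
            ((1 * 1 : ℝ) : ℂ) • W) =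
            (((P : ℂ) • (1 : Matrix (Fin n) (Fin n) ℂ)) - W) := by push_cast; module
        rw [h]; exact hWP
      · have h : (((1 * P : ℝ) : ℂ) • (1 : Matrix (Fin n) (Fin n) ℂ) -
            ((1 * 1 : ℝ) : ℂ) • W) =
            (((P : ℂ) • (1 : Matrix (Fin n) (Fin n) ℂ)) - W) := by push_cast; module
        rw [h]; exact hWP
      · have h : (((1 * 1 : ℝ) : ℂ) • W - (W - (((2 - 1 - 1) * P : ℝ) : ℂ) •
            (1 : Matrix (Fin n) (Fin n) ℂ))) = 0 := by push_cast; module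
        rw [h]; exact .zero
      · have h : (W - ((1 * 1 : ℝ) : ℂ) • W) = 0 := by push_cast; module
        rw [h]; exact .zero
      · have h : (((1 * 1 : ℝ) : ℂ) • W) = W := by push_cast; module
        rw [h]; exact hW
end
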